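/- arXiv:0905.4065 — 2 statements merged into one kernel-verified Lean document; each statement's English description precedes it below -/
import Mathlib

section
/- Let (X, Σ, μ) be a probability space and let f, g be essentially bounded measurable functions on X with 0 < a ≤ f ≤ A and 0 < b ≤ g ≤ B (almost everywhere) for constants a, A, b, B. Then (∫_X f² dμ)^{1/2} (∫_X g² dμ)^{1/2} ≤ (1/2)( √(ab/(AB)) + √(AB/(ab)) ) · ∫_X fg dμ. -/
/-!
Since `a ≤ f ≤ A` and `b ≤ g ≤ B`, the product `(B f - a g) (A g - b f)` is nonnegative, i.e.
`b B f² + a A g² ≤ (A B + a b) f g` pointwise. Integrating, and bounding the left side from below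
by AM-GM, `2 √(a b A B) ‖f‖₂ ‖g‖₂ ≤ (A B + a b) ∫ f g`, and
`(A B + a b) / (2 √(a b A B)) = ½ (√(a b / (A B)) + √(A B / (a b)))`.
-/

open MeasureTheory

lemma mul_sq_add_mul_sq_le_of_mem_Icc {a A b B x y : ℝ} (ha : 0 ≤ a) (hb : 0 ≤ b)
    (hx : a ≤ x ∧ x ≤ A) (hy : b ≤ y ∧ y ≤ B) :
    b * B * x ^ 2 + a * A * y ^ 2 ≤ (A * B + a * b) * (x * y) := by
  have hBx : a * y ≤ B * x := by nlinarith
  have hAy : b * x ≤ A * y := by nlinarith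
  nlinarith [mul_nonneg (sub_nonneg.2 hBx) (sub_nonneg.2 hAy)]

lemma two_mul_sqrt_mul_mul_sqrt_mul_sqrt_le {c d u v : ℝ} (hc : 0 ≤ c) (hd : 0 ≤ d)
    (hu : 0 ≤ u) (hv : 0 ≤ v) :
    2 * √(c * d) * (√u * √v) ≤ c * u + d * v := by
  have hsplit : √(c * d) * (√u * √v) = √(c * u) * √(d * v) := by
    simp only [Real.sqrt_mul hc, Real.sqrt_mul hd]
    ring
  calc 2 * √(c * d) * (√u * √v) = 2 * √(c * u) * √(d * v) := by rw [mul_assoc, hsplit, mul_assoc]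
    _ ≤ √(c * u) ^ 2 + √(d * v) ^ 2 := two_mul_le_add_sq _ _
    _ = c * u + d * v := by rw [Real.sq_sqrt (by positivity), Real.sq_sqrt (by positivity)]

lemma sqrt_div_add_sqrt_div {x y : ℝ} (hx : 0 < x) (hy : 0 < y) :
    √(x / y) + √(y / x) = (x + y) / √(x * y) := by
  have hsx : 0 < √x := Real.sqrt_pos.2 hx
  have hsy : 0 < √y := Real.sqrt_pos.2 hy
  rw [Real.sqrt_div' _ hy.le, Real.sqrt_div' _ hx.le, Real.sqrt_mul hx.le]
  field_simp
  rw [Real.sq_sqrt hx.le, Real.sq_sqrt hy.le]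

section Integral

variable {X : Type*} [MeasurableSpace X] {μ : Measure X} {f g : X → ℝ} {a A b B : ℝ}

lemma ae_norm_le_of_ae_mem_Icc (ha : 0 ≤ a) (hfA : ∀ᵐ x ∂μ, a ≤ f x ∧ f x ≤ A) :
    ∀ᵐ x ∂μ, ‖f x‖ ≤ A := by
  filter_upwards [hfA] with x hx
  rw [Real.norm_of_nonneg (ha.trans hx.1)]
  exact hx.2

lemma integral_mul_sq_add_mul_sq_le [IsFiniteMeasure μ]
    (hf : AEStronglyMeasurable f μ) (hg : AEStronglyMeasurable g μ) (ha : 0 ≤ a) (hb : 0 ≤ b)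
    (hfA : ∀ᵐ x ∂μ, a ≤ f x ∧ f x ≤ A) (hgB : ∀ᵐ x ∂μ, b ≤ g x ∧ g x ≤ B) :
    b * B * ∫ x, f x ^ 2 ∂μ + a * A * ∫ x, g x ^ 2 ∂μ ≤ (A * B + a * b) * ∫ x, f x * g x ∂μ := by
  have hf_bdd := ae_norm_le_of_ae_mem_Icc ha hfA
  have hg_bdd := ae_norm_le_of_ae_mem_Icc hb hgB
  have hf_int : Integrable f μ := .of_bound hf A hf_bdd
  have hg_int : Integrable g μ := .of_bound hg B hg_bdd
  have hff : Integrable (fun x => f x ^ 2) μ := by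
    simpa only [sq] using hf_int.bdd_mul hf hf_bdd
  have hgg : Integrable (fun x => g x ^ 2) μ := by
    simpa only [sq] using hg_int.bdd_mul hg hg_bdd
  have hfg : Integrable (fun x => f x * g x) μ := hg_int.bdd_mul hf hf_bdd
  rw [← integral_const_mul, ← integral_const_mul, ← integral_const_mul,
    ← integral_add (hff.const_mul _) (hgg.const_mul _)]
  refine integral_mono_ae ((hff.const_mul _).add (hgg.const_mul _)) (hfg.const_mul _) ?_
  filter_upwards [hfA, hgB] with x hx hy
  exact mul_sq_add_mul_sq_le_of_mem_Icc ha hb hx hy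

end Integral

/-- Multiplicative reverse Cauchy–Schwarz (integral) inequality on a probability space. -/
theorem integral_multiplicative_reverse_cauchy_schwarz
    {X : Type*} [MeasurableSpace X] (μ : Measure X) [IsProbabilityMeasure μ]
    (f g : X → ℝ) (hf : Measurable f) (hg : Measurable g)
    (a A b B : ℝ) (ha : 0 < a) (hb : 0 < b)
    (hfA : ∀ᵐ x ∂μ, a ≤ f x ∧ f x ≤ A)
    (hgB : ∀ᵐ x ∂μ, b ≤ g x ∧ g x ≤ B) :
    Real.sqrt (∫ x, (f x) ^ 2 ∂μ) * Real.sqrt (∫ x, (g x) ^ 2 ∂μ)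
      ≤ 1 / 2 * (Real.sqrt (a * b / (A * B)) + Real.sqrt (A * B / (a * b)))
          * ∫ x, f x * g x ∂μ := by
  obtain ⟨x₀, hfx₀, hgx₀⟩ := (hfA.and hgB).exists
  have hA : 0 < A := ha.trans_le (hfx₀.1.trans hfx₀.2)
  have hB : 0 < B := hb.trans_le (hgx₀.1.trans hgx₀.2)
  have hlin := integral_mul_sq_add_mul_sq_le hf.aestronglyMeasurable hg.aestronglyMeasurable
    ha.le hb.le hfA hgB
  have hamgm := two_mul_sqrt_mul_mul_sqrt_mul_sqrt_le (by positivity : 0 ≤ b * B)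
    (by positivity : 0 ≤ a * A) (integral_nonneg fun x => sq_nonneg (f x) : 0 ≤ ∫ x, f x ^ 2 ∂μ)
    (integral_nonneg fun x => sq_nonneg (g x) : 0 ≤ ∫ x, g x ^ 2 ∂μ)
  rw [show b * B * (a * A) = a * b * (A * B) by ring] at hamgm
  calc √(∫ x, f x ^ 2 ∂μ) * √(∫ x, g x ^ 2 ∂μ)
      = 2 * √(a * b * (A * B)) * (√(∫ x, f x ^ 2 ∂μ) * √(∫ x, g x ^ 2 ∂μ))
          / (2 * √(a * b * (A * B))) := by field_simp
    _ ≤ (A * B + a * b) * (∫ x, f x * g x ∂μ) / (2 * √(a * b * (A * B))) :=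
      div_le_div_of_nonneg_right (hamgm.trans hlin) (by positivity)
    _ = 1 / 2 * (√(a * b / (A * B)) + √(A * B / (a * b))) * ∫ x, f x * g x ∂μ := by
      rw [sqrt_div_add_sqrt_div (by positivity) (by positivity)]
      ring
end

section
/- Let a₁,…,aₙ and b₁,…,bₙ be positive real numbers with 0 < a ≤ aᵢ ≤ A < ∞ and 0 < b ≤ bᵢ ≤ B < ∞ for all 1 ≤ i ≤ n, and let w₁,…,wₙ be positive real numbers. Then (∑_{i=1}^n aᵢ²wᵢ)(∑_{i=1}^n bᵢ²wᵢ) − (∑_{i=1}^n aᵢbᵢwᵢ)² ≤ ((AB − ab)²/4) · min{ (1/(B²b²))(∑_{i=1}^n bᵢ²wᵢ)², (1/(A²a²))(∑_{i=1}^n aᵢ²wᵢ)² }. -/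
/-!
Since `a / B ≤ aᵢ / bᵢ ≤ A / b`, each product `(B aᵢ - a bᵢ)(A bᵢ - b aᵢ)` is nonnegative; summing
with the weights gives the Diaz–Metcalf inequality `bB ∑ aᵢ²wᵢ + aA ∑ bᵢ²wᵢ ≤ (AB + ab) ∑ aᵢbᵢwᵢ`.
Bounding `∑ aᵢ²wᵢ` by it turns `(∑ aᵢ²wᵢ)(∑ bᵢ²wᵢ) - (∑ aᵢbᵢwᵢ)²` into a concave quadratic in
`∑ aᵢbᵢwᵢ`, whose maximum is `(AB - ab)² (∑ bᵢ²wᵢ)² / (4B²b²)`; the other bound is symmetric.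
-/

open Finset

theorem diaz_metcalf_of_mem_Icc {a A b B x y : ℝ} (ha : 0 ≤ a) (hb : 0 ≤ b)
    (hx : x ∈ Set.Icc a A) (hy : y ∈ Set.Icc b B) :
    b * B * x ^ 2 + a * A * y ^ 2 ≤ (A * B + a * b) * (x * y) := by
  obtain ⟨hax, hxA⟩ := hx
  obtain ⟨hby, hyB⟩ := hy
  have h₁ : 0 ≤ B * x - a * y := by nlinarith
  have h₂ : 0 ≤ A * y - b * x := by nlinarith
  nlinarith [mul_nonneg h₁ h₂]

theorem diaz_metcalf_weighted {ι : Type*} (s : Finset ι) {a A b B : ℝ} (ha : 0 ≤ a) (hb : 0 ≤ b)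
    (x y w : ι → ℝ) (hx : ∀ i ∈ s, x i ∈ Set.Icc a A) (hy : ∀ i ∈ s, y i ∈ Set.Icc b B)
    (hw : ∀ i ∈ s, 0 ≤ w i) :
    b * B * ∑ i ∈ s, x i ^ 2 * w i + a * A * ∑ i ∈ s, y i ^ 2 * w i
      ≤ (A * B + a * b) * ∑ i ∈ s, x i * y i * w i := by
  simp only [mul_sum, ← sum_add_distrib]
  refine sum_le_sum fun i hi => ?_
  have := mul_le_mul_of_nonneg_right (diaz_metcalf_of_mem_Icc ha hb (hx i hi) (hy i hi)) (hw i hi)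
  linarith

theorem mul_sub_sq_le_of_diaz_metcalf {Sa Sb Sab a A b B : ℝ} (hbB : 0 < b * B) (hSb : 0 ≤ Sb)
    (h : b * B * Sa + a * A * Sb ≤ (A * B + a * b) * Sab) :
    Sa * Sb - Sab ^ 2 ≤ (A * B - a * b) ^ 2 / 4 * (1 / (B ^ 2 * b ^ 2) * Sb ^ 2) := by
  have key : (Sa * Sb - Sab ^ 2) * (4 * (B ^ 2 * b ^ 2)) ≤ (A * B - a * b) ^ 2 * Sb ^ 2 := by
    nlinarith [mul_le_mul_of_nonneg_right h hSb, sq_nonneg (2 * b * B * Sab - (A * B + a * b) * Sb)]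
  calc Sa * Sb - Sab ^ 2 ≤ (A * B - a * b) ^ 2 * Sb ^ 2 / (4 * (B ^ 2 * b ^ 2)) :=
        (le_div_iff₀ (by nlinarith [mul_pos hbB hbB])).mpr key
    _ = (A * B - a * b) ^ 2 / 4 * (1 / (B ^ 2 * b ^ 2) * Sb ^ 2) := by ring

theorem weighted_additive_reverse_cauchy_schwarz_general
    (n : ℕ) (a A b B : ℝ) (ha : 0 < a) (hb : 0 < b)
    (av bv w : Fin n → ℝ)
    (haA : ∀ i, a ≤ av i ∧ av i ≤ A) (hbB : ∀ i, b ≤ bv i ∧ bv i ≤ B)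
    (hw : ∀ i, 0 < w i) :
    (∑ i, (av i) ^ 2 * w i) * (∑ i, (bv i) ^ 2 * w i) - (∑ i, av i * bv i * w i) ^ 2
      ≤ (A * B - a * b) ^ 2 / 4
        * min (1 / (B ^ 2 * b ^ 2) * (∑ i, (bv i) ^ 2 * w i) ^ 2)
              (1 / (A ^ 2 * a ^ 2) * (∑ i, (av i) ^ 2 * w i) ^ 2) := by
  rcases isEmpty_or_nonempty (Fin n) with hempty | ⟨⟨i⟩⟩
  · simp
  have hSa : 0 ≤ ∑ i, av i ^ 2 * w i := sum_nonneg fun i _ => by have := hw i; positivity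
  have hSb : 0 ≤ ∑ i, bv i ^ 2 * w i := sum_nonneg fun i _ => by have := hw i; positivity
  have hDM := diaz_metcalf_weighted univ ha.le hb.le av bv w (fun i _ => haA i) (fun i _ => hbB i)
    fun i _ => (hw i).le
  rw [mul_min_of_nonneg _ _ (by positivity)]
  refine le_min (mul_sub_sq_le_of_diaz_metcalf (by nlinarith [hbB i]) hSb hDM) ?_
  have hDM' := (diaz_metcalf_weighted univ hb.le ha.le bv av w (fun i _ => hbB i)
    (fun i _ => haA i) fun i _ => (hw i).le)
  simp only [mul_comm (bv _) (av _)] at hDM'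
  have := mul_sub_sq_le_of_diaz_metcalf (by nlinarith [haA i]) hSa hDM'
  linarith [show (B * A - b * a) ^ 2 = (A * B - a * b) ^ 2 by ring]

/-- Weighted additive reverse Cauchy–Schwarz inequality with a `min` of two bounds. -/
theorem weighted_additive_reverse_cauchy_schwarz
    (n : ℕ) (hn : 0 < n) (a A b B : ℝ) (ha : 0 < a) (hb : 0 < b)
    (av bv w : Fin n → ℝ)
    (haA : ∀ i, a ≤ av i ∧ av i ≤ A) (hbB : ∀ i, b ≤ bv i ∧ bv i ≤ B)
    (hw : ∀ i, 0 < w i) :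
    (∑ i, (av i) ^ 2 * w i) * (∑ i, (bv i) ^ 2 * w i) - (∑ i, av i * bv i * w i) ^ 2
      ≤ (A * B - a * b) ^ 2 / 4
        * min (1 / (B ^ 2 * b ^ 2) * (∑ i, (bv i) ^ 2 * w i) ^ 2)
              (1 / (A ^ 2 * a ^ 2) * (∑ i, (av i) ^ 2 * w i) ^ 2) :=
  weighted_additive_reverse_cauchy_schwarz_general n a A b B ha hb av bv w haA hbB hw
end
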